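/- Let A be a monotonic modal algebra (□(x ⊓ y) ≤ □x ⊓ □y for all x, y) and S a countable family of subsets of A. Let Q_S(A) be the set of Q-filters of A for S, let V_A(F) be the upward closure under ⊆ of {f(y) | □y ∈ F} where f(x) = {G ∈ Q_S(A) | x ∈ G}, and for X ⊆ Q_S(A) let □' X = {F ∈ Q_S(A) | X ∈ V_A(F)}. Then f : A → 𝒫(Q_S(A)) is injective, is a Boolean homomorphism (f(x ⊓ y) = f(x) ∩ f(y), f(¬x) = Q_S(A) \ f(x), f(0) = ∅, f(1) = Q_S(A)), satisfies f(□x) = □' f(x) for every x ∈ A, and satisfies f(⨅X) = ⋂_{x ∈ X} f(x) for every X ∈ S whose infimum ⨅X exists in A. (Extension of the Jónsson–Tarski representation, monotonic case.) -/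
import Mathlib


variable {α : Type*}

/-- A filter of a Boolean algebra: a nonempty, upward-closed subset
closed under binary meets. -/
def IsGoodFilter [BooleanAlgebra α] (F : Set α) : Prop :=
  F.Nonempty ∧ (∀ x y : α, x ∈ F → x ≤ y → y ∈ F) ∧
    (∀ x y : α, x ∈ F → y ∈ F → x ⊓ y ∈ F)

/-- A prime filter: a proper filter (⊥ ∉ F) such that x ⊔ y ∈ F implies
x ∈ F or y ∈ F. -/
def IsPrimeFilter [BooleanAlgebra α] (F : Set α) : Prop :=
  IsGoodFilter F ∧ (⊥ : α) ∉ F ∧ ∀ x y : α, x ⊔ y ∈ F → x ∈ F ∨ y ∈ F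

/-- A Q-filter for a family `S` of subsets: a prime filter such that for every
`X ∈ S` whose infimum exists and with `X ⊆ F`, the infimum belongs to `F`. -/
def IsQFilter [BooleanAlgebra α] (S : Set (Set α)) (F : Set α) : Prop :=
  IsPrimeFilter F ∧ ∀ X ∈ S, ∀ m : α, IsGLB X m → X ⊆ F → m ∈ F

/-- The set of all Q-filters for `S`. -/
abbrev QFilt [BooleanAlgebra α] (S : Set (Set α)) := {F : Set α // IsQFilter S F}

/-- The Stone-style map `f x = {F ∈ Q_S(A) | x ∈ F}`. -/
def fset [BooleanAlgebra α] (S : Set (Set α)) (x : α) : Set (QFilt S) :=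
  {F | x ∈ F.1}

/-- The neighborhood map of the frame `J_S(A)`: the upward closure (under ⊆)
of the family `{f y | □y ∈ F}`. -/
def nbhd [BooleanAlgebra α] (box : α → α) (S : Set (Set α)) (F : QFilt S) :
    Set (Set (QFilt S)) :=
  {X | ∃ y : α, box y ∈ F.1 ∧ fset S y ⊆ X}

/-- The neighborhood map of the frame `J̄_S(A)`: the family `{f y | □y ∈ F}`,
without taking upward closure. -/
def nbhdBar [BooleanAlgebra α] (box : α → α) (S : Set (Set α)) (F : QFilt S) :
    Set (Set (QFilt S)) :=
  {X | ∃ y : α, box y ∈ F.1 ∧ fset S y = X}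


section Aux
variable [BooleanAlgebra α]

open Classical in
/-- One refinement step. -/
noncomputable def stepEl (b : α) (X : Set α) : α :=
  if h : ∃ z ∈ X, b ⊓ zᶜ ≠ ⊥ then b ⊓ h.choose ᶜ else b

lemma stepEl_le (b : α) (X : Set α) : stepEl b X ≤ b := by
  classical
  unfold stepEl
  split <;> simp

lemma stepEl_ne_bot {b : α} (hb : b ≠ ⊥) (X : Set α) : stepEl b X ≠ ⊥ := by
  classical
  unfold stepEl
  split
  · next h => exact h.choose_spec.2
  · exact hb

lemma stepEl_spec (b : α) {X : Set α} {m : α} (hm : IsGLB X m) :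
    stepEl b X ≤ m ∨ ∃ z ∈ X, stepEl b X ≤ zᶜ := by
  classical
  unfold stepEl
  split
  · next h =>
    exact Or.inr ⟨h.choose, h.choose_spec.1, inf_le_right⟩
  · next h =>
    push_neg at h
    refine Or.inl (hm.2 fun z hz => ?_)
    have h2 : b ⊓ zᶜ = ⊥ := not_not.mp (fun hc => hc (h z hz))
    rwa [← sdiff_eq, sdiff_eq_bot_iff] at h2

/-- The decreasing sequence. -/
noncomputable def seqEl (a : α) (e : ℕ → Set α) : ℕ → α
  | 0 => a
  | n + 1 => stepEl (seqEl a e n) (e n)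

lemma seqEl_ne_bot {a : α} (ha : a ≠ ⊥) (e : ℕ → Set α) : ∀ n, seqEl a e n ≠ ⊥
  | 0 => ha
  | n + 1 => stepEl_ne_bot (seqEl_ne_bot ha e n) (e n)

lemma seqEl_antitone (a : α) (e : ℕ → Set α) : Antitone (seqEl a e) :=
  antitone_nat_of_succ_le fun n => stepEl_le _ _

end Aux

section Main
variable [BooleanAlgebra α]

lemma maximal_filter_prime {F : Set α}
    (hmax : Maximal (fun G => IsGoodFilter G ∧ (⊥ : α) ∉ G) F) :
    IsPrimeFilter F := by
  obtain ⟨⟨hne, hup, hmeet⟩, hbot⟩ := hmax.1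
  have hcompl : ∀ x : α, x ∉ F → xᶜ ∈ F := by
    intro x hx
    -- extend F by x
    set G : Set α := {b | ∃ c ∈ F, c ⊓ x ≤ b} with hG
    by_cases hGbot : (⊥ : α) ∈ G
    · obtain ⟨c, hc, hcx⟩ := hGbot
      have : c ≤ xᶜ := by
        have h2 : c ⊓ x = ⊥ := le_bot_iff.mp hcx
        have := sdiff_eq_bot_iff.mp (by rwa [sdiff_eq, compl_compl] : c \ xᶜ = ⊥)
        exact this
      exact hup c _ hc this
    · exfalso
      have hGfilt : IsGoodFilter G ∧ (⊥ : α) ∉ G := by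
        refine ⟨⟨?_, ?_, ?_⟩, hGbot⟩
        · obtain ⟨c, hc⟩ := hne
          exact ⟨c ⊓ x, ⟨c, hc, le_rfl⟩⟩
        · rintro u v ⟨c, hc, hcu⟩ huv
          exact ⟨c, hc, hcu.trans huv⟩
        · rintro u v ⟨c, hc, hcu⟩ ⟨d, hd, hdv⟩
          refine ⟨c ⊓ d, hmeet c d hc hd, ?_⟩
          have : c ⊓ d ⊓ x ≤ (c ⊓ x) ⊓ (d ⊓ x) :=
            le_inf (inf_le_inf_right x inf_le_left) (inf_le_inf_right x inf_le_right)
          exact this.trans (inf_le_inf hcu hdv)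
      have hFG : F ⊆ G := fun c hc => ⟨c, hc, inf_le_left⟩
      have := hmax.2 hGfilt hFG
      exact hx (this ⟨(⊤ : α), hup _ _ hne.choose_spec le_top, by simp⟩)
  refine ⟨⟨hne, hup, hmeet⟩, hbot, ?_⟩
  intro x y hxy
  by_contra hc
  push_neg at hc
  have hx := hcompl x hc.1
  have hy := hcompl y hc.2
  have : (x ⊔ y) ⊓ (xᶜ ⊓ yᶜ) ∈ F := hmeet _ _ hxy (hmeet _ _ hx hy)
  rw [← compl_sup, inf_compl_eq_bot] at this
  exact hbot this

lemma exists_qfilter (S : Set (Set α)) (hS : S.Countable) {a : α} (ha : a ≠ ⊥) :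
    ∃ F : Set α, IsQFilter S F ∧ a ∈ F := by
  -- enumerate S (augmented to be nonempty)
  obtain ⟨e, he⟩ : ∃ e : ℕ → Set α, ∀ X ∈ S, ∃ n, e n = X := by
    obtain ⟨e, he⟩ := (hS.insert {(⊤ : α)}).exists_eq_range (Set.insert_nonempty _ _)
    exact ⟨e, fun X hX => by
      have : X ∈ Set.range e := he ▸ Set.mem_insert_of_mem _ hX
      obtain ⟨n, hn⟩ := this; exact ⟨n, hn⟩⟩
  set s := seqEl a e with hs
  set F₀ : Set α := {b | ∃ n, s n ≤ b} with hF₀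
  have hF₀filt : IsGoodFilter F₀ ∧ (⊥ : α) ∉ F₀ := by
    refine ⟨⟨⟨a, 0, le_rfl⟩, ?_, ?_⟩, ?_⟩
    · rintro u v ⟨n, hn⟩ huv; exact ⟨n, hn.trans huv⟩
    · rintro u v ⟨n, hn⟩ ⟨m, hm⟩
      refine ⟨max n m, le_inf ?_ ?_⟩
      · exact (seqEl_antitone a e (le_max_left n m)).trans hn
      · exact (seqEl_antitone a e (le_max_right n m)).trans hm
    · rintro ⟨n, hn⟩
      exact seqEl_ne_bot ha e n (le_bot_iff.mp hn)
  obtain ⟨F, hF₀F, hFmax⟩ := zorn_subset_nonempty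
      {G : Set α | IsGoodFilter G ∧ (⊥ : α) ∉ G}
      (fun c hcsub hchain hcne => by
        refine ⟨⋃₀ c, ⟨⟨?_, ?_, ?_⟩, ?_⟩, fun t ht => Set.subset_sUnion_of_mem ht⟩
        · obtain ⟨t, ht⟩ := hcne
          obtain ⟨x, hx⟩ := (hcsub ht).1.1
          exact ⟨x, t, ht, hx⟩
        · rintro u v ⟨t, ht, hu⟩ huv
          exact ⟨t, ht, (hcsub ht).1.2.1 u v hu huv⟩
        · rintro u v ⟨t, ht, hu⟩ ⟨t', ht', hv⟩
          rcases hchain.total ht ht' with h | h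
          · exact ⟨t', ht', (hcsub ht').1.2.2 u v (h hu) hv⟩
          · exact ⟨t, ht, (hcsub ht).1.2.2 u v hu (h hv)⟩
        · rintro ⟨t, ht, hbot⟩
          exact (hcsub ht).2 hbot)
      F₀ hF₀filt
  have hprime := maximal_filter_prime hFmax
  have hsF : ∀ n, s n ∈ F := fun n => hF₀F ⟨n, le_rfl⟩
  refine ⟨F, ⟨hprime, ?_⟩, hF₀F ⟨0, le_rfl⟩⟩
  intro X hX m hm hXF
  obtain ⟨n, hn⟩ := he X hX
  subst hn
  rcases stepEl_spec (s n) hm with h | ⟨z, hz, hle⟩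
  · exact hprime.1.2.1 _ _ (hsF (n + 1)) h
  · exfalso
    have hzc : zᶜ ∈ F := hprime.1.2.1 _ _ (hsF (n + 1)) hle
    have : z ⊓ zᶜ ∈ F := hprime.1.2.2 _ _ (hXF hz) hzc
    rw [inf_compl_eq_bot] at this
    exact hprime.2.1 this

end Main

section Thm
variable [BooleanAlgebra α]

lemma top_mem_qfilter {S : Set (Set α)} (F : QFilt S) : (⊤ : α) ∈ F.1 := by
  obtain ⟨x, hx⟩ := F.2.1.1.1
  exact F.2.1.1.2.1 x ⊤ hx le_top

lemma fset_subset {S : Set (Set α)} (hS : S.Countable) {x y : α}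
    (h : fset S x ⊆ fset S y) : x ≤ y := by
  by_contra hxy
  have hne : x ⊓ yᶜ ≠ ⊥ := by
    intro hb
    exact hxy (sdiff_eq_bot_iff.mp (by rwa [sdiff_eq]))
  obtain ⟨F, hF, haF⟩ := exists_qfilter S hS hne
  have hx : x ∈ F := hF.1.1.2.1 _ _ haF inf_le_left
  have hyc : yᶜ ∈ F := hF.1.1.2.1 _ _ haF inf_le_right
  have hy : y ∈ (⟨F, hF⟩ : QFilt S).1 := h (show (⟨F, hF⟩ : QFilt S) ∈ fset S x from hx)
  have : y ⊓ yᶜ ∈ F := hF.1.1.2.2 _ _ hy hyc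
  rw [inf_compl_eq_bot] at this
  exact hF.1.2.1 this

end Thm

/-- Extension of the Jónsson–Tarski representation, monotonic case: the Stone
map into the dual algebra of the neighborhood frame `J_S(A)` is an injective
Boolean homomorphism that commutes with `□` and preserves the infima of
members of `S`. -/
theorem jonsson_tarski_monotonic [BooleanAlgebra α] (box : α → α)
    (hmono : ∀ x y : α, box (x ⊓ y) ≤ box x ⊓ box y)
    (S : Set (Set α)) (hS : S.Countable) :
    Function.Injective (fset S) ∧
    (∀ x y : α, fset S (x ⊓ y) = fset S x ∩ fset S y) ∧
    (∀ x : α, fset S xᶜ = (fset S x)ᶜ) ∧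
    fset S (⊥ : α) = ∅ ∧
    fset S (⊤ : α) = Set.univ ∧
    (∀ x : α, fset S (box x) = {F : QFilt S | fset S x ∈ nbhd box S F}) ∧
    (∀ X ∈ S, ∀ m : α, IsGLB X m → fset S m = ⋂ x ∈ X, fset S x) := by
  have hboxmono : ∀ x y : α, x ≤ y → box x ≤ box y := by
    intro x y hxy
    have : box (x ⊓ y) ≤ box y := (hmono x y).trans inf_le_right
    rwa [inf_eq_left.mpr hxy] at this
  refine ⟨?_, ?_, ?_, ?_, ?_, ?_, ?_⟩
  · intro x y h
    exact le_antisymm (fset_subset hS h.le) (fset_subset hS h.ge)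
  · intro x y
    ext F
    simp only [fset, Set.mem_setOf_eq, Set.mem_inter_iff]
    constructor
    · intro h
      exact ⟨F.2.1.1.2.1 _ _ h inf_le_left, F.2.1.1.2.1 _ _ h inf_le_right⟩
    · rintro ⟨h1, h2⟩
      exact F.2.1.1.2.2 _ _ h1 h2
  · intro x
    ext F
    simp only [fset, Set.mem_setOf_eq, Set.mem_compl_iff]
    constructor
    · intro h hx
      have : x ⊓ xᶜ ∈ F.1 := F.2.1.1.2.2 _ _ hx h
      rw [inf_compl_eq_bot] at this
      exact F.2.1.2.1 this
    · intro h
      have htop : x ⊔ xᶜ ∈ F.1 := by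
        rw [sup_compl_eq_top]; exact top_mem_qfilter F
      rcases F.2.1.2.2 _ _ htop with h' | h'
      · exact absurd h' h
      · exact h'
  · ext F
    simp only [fset, Set.mem_setOf_eq, Set.mem_empty_iff_false, iff_false]
    exact F.2.1.2.1
  · ext F
    simp only [fset, Set.mem_setOf_eq, Set.mem_univ, iff_true]
    exact top_mem_qfilter F
  · intro x
    ext F
    simp only [fset, Set.mem_setOf_eq, nbhd]
    constructor
    · intro h
      exact ⟨x, h, subset_rfl⟩
    · rintro ⟨y, hy, hsub⟩
      have : y ≤ x := fset_subset hS hsub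
      exact F.2.1.1.2.1 _ _ hy (hboxmono _ _ this)
  · intro X hX m hm
    ext F
    simp only [fset, Set.mem_setOf_eq, Set.mem_iInter]
    constructor
    · intro h x hx
      exact F.2.1.1.2.1 _ _ h (hm.1 hx)
    · intro h
      exact F.2.2 X hX m hm fun x hx => h x hx
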